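/- arXiv:0710.3456 — 2 statements merged into one kernel-verified Lean document; each statement's English description precedes it below -/
import Mathlib

section
/- sup_{F ∈ 𝕍} sup_{x∈ℝ} |F(x) − Φ(x)| ≤ C_Φ < 0.541, where 𝕍 is the class of CDFs of random variables with mean 0 and variance 1 and C_Φ = sup_{t∈ℝ}(1/(1+t²) − Φ(−|t|)). -/
/-!
Cantelli's one-sided inequality bounds both tails `P(X ≤ -s)` and `P(X ≥ s)` of a centred
variable of unit variance by `1 / (1 + s²)`. For `x ≤ 0` this gives
`F(x) - Φ(x) ≤ 1 / (1 + x²) - Φ(-|x|)`, while `Φ(x) - F(x) ≤ Φ(0) = 1 / 2`, the value of the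
supremand at `t = 0`; the case `x > 0` is symmetric. For the numerical bound, integrating
`exp (-u) ≤ 1 - u + u² / 2` bounds `Φ(-s)` from below by a polynomial, which suffices for
`s ≤ 0.93`; beyond that, `1 / (1 + s²) ≤ 1 / (1 + 0.93²) < 0.541` alone does.
-/

open Real MeasureTheory

noncomputable def stdNormalCDF (x : ℝ) : ℝ :=
  ∫ t in Set.Iic x, Real.exp (-t ^ 2 / 2) / Real.sqrt (2 * Real.pi)

open ProbabilityTheory Set

section Cantelli

variable {Ω : Type*} [MeasurableSpace Ω] {μ : Measure Ω} [IsProbabilityMeasure μ] {X : Ω → ℝ}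

theorem cantelli (hX : MemLp X 2 μ) (hmean : ∫ ω, X ω ∂μ = 0) {t : ℝ} (ht : 0 < t) :
    μ.real {ω | t ≤ X ω} ≤ (∫ ω, X ω ^ 2 ∂μ) / ((∫ ω, X ω ^ 2 ∂μ) + t ^ 2) := by
  set v := ∫ ω, X ω ^ 2 ∂μ
  have hv : 0 ≤ v := integral_nonneg fun ω => sq_nonneg (X ω)
  -- `c = v / t` is the shift for which Markov's inequality applied to `(X + c)²` is sharpest
  set c := v / t
  have hsq : Integrable (fun ω => X ω ^ 2) μ := hX.integrable_sq
  have hlin : Integrable (fun ω => 2 * c * X ω) μ := (hX.integrable one_le_two).const_mul _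
  have hsum : Integrable (fun ω => X ω ^ 2 + 2 * c * X ω) μ := hsq.add hlin
  have hexpand : (fun ω => (X ω + c) ^ 2) = fun ω => X ω ^ 2 + 2 * c * X ω + c ^ 2 := by
    ext ω; ring
  have hint : Integrable (fun ω => (X ω + c) ^ 2) μ := hexpand ▸ hsum.add (integrable_const _)
  have hsecond : ∫ ω, (X ω + c) ^ 2 ∂μ = v + c ^ 2 := by
    rw [hexpand, integral_add hsum (integrable_const _), integral_add hsq hlin,
      integral_const_mul, hmean]
    simp [v]
  have hmarkov := mul_meas_ge_le_integral_of_nonneg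
    (Filter.Eventually.of_forall fun ω => sq_nonneg (X ω + c)) hint ((t + c) ^ 2)
  have htc : 0 < t + c := by positivity
  have hsub : {ω | t ≤ X ω} ⊆ {ω | (t + c) ^ 2 ≤ (X ω + c) ^ 2} := fun ω hω =>
    pow_le_pow_left₀ htc.le (add_le_add_left hω c) 2
  calc μ.real {ω | t ≤ X ω} ≤ μ.real {ω | (t + c) ^ 2 ≤ (X ω + c) ^ 2} := measureReal_mono hsub
    _ ≤ (v + c ^ 2) / (t + c) ^ 2 := by
      rw [le_div_iff₀ (by positivity), mul_comm, ← hsecond]; exact hmarkov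
    _ = v / (v + t ^ 2) := by
      simp only [c]; field_simp; ring

theorem measureReal_ge_le_one_div_one_add_sq (hX : MemLp X 2 μ) (hmean : ∫ ω, X ω ∂μ = 0)
    (hvar : ∫ ω, X ω ^ 2 ∂μ = 1) {t : ℝ} (ht : 0 ≤ t) :
    μ.real {ω | t ≤ X ω} ≤ 1 / (1 + t ^ 2) := by
  rcases ht.eq_or_lt with rfl | ht
  · simp
  · simpa [hvar] using cantelli hX hmean ht

end Cantelli

section NormalCDF

local notation "φ" => gaussianPDFReal 0 1

lemma gaussianPDFReal_zero_one (t : ℝ) : φ t = exp (-t ^ 2 / 2) / √(2 * π) := by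
  simp [gaussianPDFReal, div_eq_inv_mul]

lemma stdNormalCDF_eq_setIntegral (x : ℝ) : stdNormalCDF x = ∫ t in Iic x, φ t := by
  simp only [stdNormalCDF, gaussianPDFReal_zero_one]

lemma stdNormalCDF_nonneg (x : ℝ) : 0 ≤ stdNormalCDF x := by
  rw [stdNormalCDF_eq_setIntegral]
  exact setIntegral_nonneg measurableSet_Iic fun t _ => gaussianPDFReal_nonneg 0 1 t

lemma stdNormalCDF_sub_stdNormalCDF (a b : ℝ) :
    stdNormalCDF b - stdNormalCDF a = ∫ t in a..b, φ t := by
  simp only [stdNormalCDF_eq_setIntegral]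
  exact intervalIntegral.integral_Iic_sub_Iic (integrable_gaussianPDFReal 0 1).integrableOn
    (integrable_gaussianPDFReal 0 1).integrableOn

lemma monotone_stdNormalCDF : Monotone stdNormalCDF := fun a b hab => by
  rw [← sub_nonneg, stdNormalCDF_sub_stdNormalCDF]
  exact intervalIntegral.integral_nonneg hab fun t _ => gaussianPDFReal_nonneg 0 1 t

lemma stdNormalCDF_add_stdNormalCDF_neg (x : ℝ) : stdNormalCDF x + stdNormalCDF (-x) = 1 := by
  have hreflect : stdNormalCDF (-x) = ∫ t in Ioi x, φ t := by
    rw [stdNormalCDF_eq_setIntegral, ← neg_neg x, ← integral_comp_neg_Ioi, neg_neg]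
    simp [gaussianPDFReal_zero_one]
  rw [hreflect, stdNormalCDF_eq_setIntegral, ← integral_gaussianPDFReal_eq_one 0 one_ne_zero]
  exact intervalIntegral.integral_Iic_add_Ioi (integrable_gaussianPDFReal 0 1).integrableOn
    (integrable_gaussianPDFReal 0 1).integrableOn

lemma stdNormalCDF_zero : stdNormalCDF 0 = 1 / 2 := by
  have h := stdNormalCDF_add_stdNormalCDF_neg 0
  rw [neg_zero] at h
  linarith

lemma stdNormalCDF_neg_eq_half_sub (s : ℝ) : stdNormalCDF (-s) = 1 / 2 - ∫ t in 0..s, φ t := by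
  linarith [stdNormalCDF_add_stdNormalCDF_neg s, stdNormalCDF_sub_stdNormalCDF 0 s,
    stdNormalCDF_zero]

lemma exp_neg_le_one_sub_add_sq_div_two {x : ℝ} (hx : 0 ≤ x) : exp (-x) ≤ 1 - x + x ^ 2 / 2 := by
  have hsum : 1 + x + x ^ 2 / 2 + x ^ 3 / 6 ≤ exp x := by
    simpa [Finset.sum_range_succ, Nat.factorial] using Real.sum_le_exp_of_nonneg hx 4
  rw [exp_neg, inv_le_iff_one_le_mul₀ (exp_pos x)]
  nlinarith [pow_nonneg hx 3, pow_nonneg hx 4, pow_nonneg hx 5]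

lemma intervalIntegral_gaussianPDFReal_le {s : ℝ} (hs : 0 ≤ s) :
    ∫ t in 0..s, φ t ≤ (s - s ^ 3 / 6 + s ^ 5 / 40) / √(2 * π) := by
  have hpoly : ∫ t in 0..s, (1 - t ^ 2 / 2 + t ^ 4 / 8) = s - s ^ 3 / 6 + s ^ 5 / 40 := by
    rw [intervalIntegral.integral_add, intervalIntegral.integral_sub]
    · simp only [intervalIntegral.integral_const, intervalIntegral.integral_div, integral_pow,
        smul_eq_mul]
      ring
    all_goals exact Continuous.intervalIntegrable (by fun_prop) _ _
  rw [← hpoly, ← intervalIntegral.integral_div]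
  refine intervalIntegral.integral_mono_on hs (integrable_gaussianPDFReal 0 1).intervalIntegrable
    (Continuous.intervalIntegrable (by fun_prop) _ _) fun t _ => ?_
  rw [gaussianPDFReal_zero_one]
  gcongr
  calc exp (-t ^ 2 / 2) = exp (-(t ^ 2 / 2)) := by ring_nf
    _ ≤ 1 - t ^ 2 / 2 + (t ^ 2 / 2) ^ 2 / 2 := exp_neg_le_one_sub_add_sq_div_two (by positivity)
    _ = 1 - t ^ 2 / 2 + t ^ 4 / 8 := by ring

end NormalCDF

noncomputable def cantelliGap (t : ℝ) : ℝ := 1 / (1 + t ^ 2) - stdNormalCDF (-|t|)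

lemma cantelliGap_zero : cantelliGap 0 = 1 / 2 := by
  norm_num [cantelliGap, stdNormalCDF_zero]

lemma bddAbove_range_cantelliGap : BddAbove (range cantelliGap) := by
  refine ⟨1, ?_⟩
  rintro _ ⟨t, rfl⟩
  have h : 1 / (1 + t ^ 2) ≤ 1 := div_le_one_of_le₀ (by nlinarith) (by positivity)
  rw [cantelliGap]
  linarith [stdNormalCDF_nonneg (-|t|)]

lemma cantelliGap_le (t : ℝ) : cantelliGap t ≤ 0.54099 := by
  set s := |t|
  have hs : 0 ≤ s := abs_nonneg t
  rw [cantelliGap, ← sq_abs t]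
  rcases le_or_gt s 0.93 with hsmall | hlarge
  · have hsqrt : (2.5066 : ℝ) ≤ √(2 * π) := Real.le_sqrt_of_sq_le (by nlinarith [pi_gt_d6])
    -- nearly tight at `s ≈ 0.2131`, where the supremand is maximal
    have hpoly :
        (s - s ^ 3 / 6 + s ^ 5 / 40) * (1 + s ^ 2) ≤ 2.5066 * (0.04099 + 1.04099 * s ^ 2) := by
      nlinarith [sq_nonneg (s - 0.2131), sq_nonneg (s * (s - 0.2131)),
        sq_nonneg (s ^ 2 * (s - 0.2131)), mul_nonneg hs (sub_nonneg.2 hsmall), sq_nonneg s,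
        sq_nonneg (s ^ 2 - 0.05), mul_nonneg (mul_nonneg hs hs) (sub_nonneg.2 hsmall),
        sq_nonneg ((s - 0.2131) * (s - 0.93))]
    have hrhs : 1.04099 - 1 / (1 + s ^ 2) = (0.04099 + 1.04099 * s ^ 2) / (1 + s ^ 2) := by
      field_simp; ring
    have htaylor : (s - s ^ 3 / 6 + s ^ 5 / 40) / √(2 * π) ≤ 1.04099 - 1 / (1 + s ^ 2) := by
      rw [hrhs, div_le_div_iff₀ (by positivity) (by positivity)]
      calc (s - s ^ 3 / 6 + s ^ 5 / 40) * (1 + s ^ 2)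
          ≤ 2.5066 * (0.04099 + 1.04099 * s ^ 2) := hpoly
        _ ≤ √(2 * π) * (0.04099 + 1.04099 * s ^ 2) := by gcongr
        _ = (0.04099 + 1.04099 * s ^ 2) * √(2 * π) := mul_comm _ _
    rw [stdNormalCDF_neg_eq_half_sub]
    linarith [intervalIntegral_gaussianPDFReal_le hs]
  · have h : 1 / (1 + s ^ 2) ≤ 1 / (1 + 0.93 ^ 2) := by gcongr
    linarith [stdNormalCDF_nonneg (-s), show (1 : ℝ) / (1 + 0.93 ^ 2) ≤ 0.54099 by norm_num]

lemma memLp_id_two_of_integral_sq_ne_zero {μ : Measure ℝ} (hvar : ∫ x, x ^ 2 ∂μ ≠ 0) :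
    MemLp id 2 μ :=
  (memLp_two_iff_integrable_sq aestronglyMeasurable_id).2 (Integrable.of_integral_ne_zero hvar)

section CDFBounds

variable {μ : Measure ℝ} [IsProbabilityMeasure μ]

lemma measureReal_Iic_le_one_div_one_add_sq (hmean : ∫ x, x ∂μ = 0) (hvar : ∫ x, x ^ 2 ∂μ = 1)
    {x : ℝ} (hx : x ≤ 0) : μ.real (Iic x) ≤ 1 / (1 + x ^ 2) := by
  have hX : MemLp id 2 μ := memLp_id_two_of_integral_sq_ne_zero (by simp [hvar])
  have h := measureReal_ge_le_one_div_one_add_sq hX.neg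
    (by rw [integral_neg']; exact neg_eq_zero.2 hmean) (by simpa using hvar) (neg_nonneg.2 hx)
  simp only [Pi.neg_apply, id, neg_le_neg_iff, even_two, Even.neg_pow] at h
  exact h

lemma one_sub_one_div_one_add_sq_le_measureReal_Iic (hmean : ∫ x, x ∂μ = 0)
    (hvar : ∫ x, x ^ 2 ∂μ = 1) {x : ℝ} (hx : 0 ≤ x) : 1 - 1 / (1 + x ^ 2) ≤ μ.real (Iic x) := by
  have hX : MemLp id 2 μ := memLp_id_two_of_integral_sq_ne_zero (by simp [hvar])
  have hIci : μ.real (Ici x) ≤ 1 / (1 + x ^ 2) :=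
    measureReal_ge_le_one_div_one_add_sq hX hmean hvar hx
  have hIoi : μ.real (Ioi x) ≤ μ.real (Ici x) := measureReal_mono Ioi_subset_Ici_self
  have hcompl := probReal_compl_eq_one_sub (μ := μ) (measurableSet_Iic (a := x))
  rw [compl_Iic] at hcompl
  linarith

lemma abs_measureReal_Iic_sub_stdNormalCDF_le (hmean : ∫ x, x ∂μ = 0)
    (hvar : ∫ x, x ^ 2 ∂μ = 1) (x : ℝ) :
    |μ.real (Iic x) - stdNormalCDF x| ≤ max (cantelliGap |x|) (cantelliGap 0) := by
  have hgap : cantelliGap |x| = 1 / (1 + x ^ 2) - stdNormalCDF (-|x|) := by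
    rw [cantelliGap, abs_abs, sq_abs]
  rw [hgap, cantelliGap_zero, abs_sub_le_iff]
  rcases le_or_gt x 0 with hx | hx
  · have hlower := measureReal_Iic_le_one_div_one_add_sq hmean hvar hx
    have hΦ : stdNormalCDF x ≤ 1 / 2 := stdNormalCDF_zero ▸ monotone_stdNormalCDF hx
    rw [abs_of_nonpos hx, neg_neg]
    constructor
    · exact le_max_of_le_left (by linarith)
    · exact le_max_of_le_right (by linarith [measureReal_nonneg (μ := μ) (s := Iic x)])
  · have hupper := one_sub_one_div_one_add_sq_le_measureReal_Iic hmean hvar hx.le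
    have hΦ : 1 / 2 ≤ stdNormalCDF x := stdNormalCDF_zero ▸ monotone_stdNormalCDF hx.le
    have hsymm := stdNormalCDF_add_stdNormalCDF_neg x
    rw [abs_of_pos hx]
    constructor
    · exact le_max_of_le_right (by linarith [measureReal_le_one (μ := μ) (s := Iic x)])
    · exact le_max_of_le_left (by linarith)

end CDFBounds

theorem sup_delta_le_C_Phi :
    (∀ μ : Measure ℝ, IsProbabilityMeasure μ →
      (∫ x, x ∂μ) = 0 → (∫ x, x ^ 2 ∂μ) = 1 →
      ∀ x : ℝ, |(μ (Set.Iic x)).toReal - stdNormalCDF x| ≤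
        ⨆ t : ℝ, (1 / (1 + t ^ 2) - stdNormalCDF (-|t|))) ∧
    (⨆ t : ℝ, (1 / (1 + t ^ 2) - stdNormalCDF (-|t|))) < 0.541 := by
  refine ⟨fun μ _ hmean hvar x => ?_, (ciSup_le cantelliGap_le).trans_lt (by norm_num)⟩
  exact (abs_measureReal_Iic_sub_stdNormalCDF_le hmean hvar x).trans
    (max_le (le_ciSup bddAbove_range_cantelliGap _) (le_ciSup bddAbove_range_cantelliGap _))
end

section
/- The unique positive root x_Φ of x·e^{x²/2}/(1+x²)² = 1/√(8π) satisfies: Ψ(x) = 1/(1+x²) − Φ(−x) is nondecreasing on (0, x_Φ] and strictly decreasing on (x_Φ, ∞). -/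
open Real MeasureTheory

/-!
Ψ'(x) = φ(x) - 2x/(1+x²)² = 2 e^{-x²/2} (1/√(8π) - g(x)) where g = `criticalRatio`.
Since g'(x) = e^{x²/2}(1-x²)²/(1+x²)³ vanishes only at x = ±1, g is strictly increasing, so the
sign of Ψ' changes exactly once, at the point where g = 1/√(8π).
-/

open Set

noncomputable section

def stdNormalPDF (t : ℝ) : ℝ := Real.exp (-t ^ 2 / 2) / Real.sqrt (2 * Real.pi)

lemma continuous_stdNormalPDF : Continuous stdNormalPDF := by
  unfold stdNormalPDF; fun_prop

lemma integrable_stdNormalPDF : Integrable stdNormalPDF := by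
  have h := (integrable_exp_neg_mul_sq (b := 1 / 2) (by norm_num)).div_const √(2 * π)
  convert h using 2 with t
  rw [stdNormalPDF, neg_div, neg_mul, one_div_mul_eq_div]

lemma stdNormalPDF_neg (t : ℝ) : stdNormalPDF (-t) = stdNormalPDF t := by
  simp only [stdNormalPDF, neg_sq]

lemma hasDerivAt_stdNormalCDF (x : ℝ) : HasDerivAt stdNormalCDF (stdNormalPDF x) x := by
  have hsplit : stdNormalCDF =
      fun y => (∫ t in Iic 0, stdNormalPDF t) + ∫ t in (0)..y, stdNormalPDF t := by
    funext y
    rw [← intervalIntegral.integral_Iic_sub_Iic integrable_stdNormalPDF.integrableOn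
      integrable_stdNormalPDF.integrableOn, add_sub_cancel]
    rfl
  rw [hsplit]
  exact (intervalIntegral.integral_hasDerivAt_right integrable_stdNormalPDF.intervalIntegrable
    (continuous_stdNormalPDF.stronglyMeasurableAtFilter _ _)
    continuous_stdNormalPDF.continuousAt).const_add _

def criticalRatio (y : ℝ) : ℝ := y * Real.exp (y ^ 2 / 2) / (1 + y ^ 2) ^ 2

lemma criticalRatio_neg (y : ℝ) : criticalRatio (-y) = -criticalRatio y := by
  simp only [criticalRatio, neg_sq, neg_mul, neg_div]

lemma hasDerivAt_criticalRatio (y : ℝ) :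
    HasDerivAt criticalRatio (Real.exp (y ^ 2 / 2) * (1 - y ^ 2) ^ 2 / (1 + y ^ 2) ^ 3) y := by
  have hexp : HasDerivAt (fun y : ℝ => Real.exp (y ^ 2 / 2)) (Real.exp (y ^ 2 / 2) * y) y := by
    simpa using (((hasDerivAt_pow 2 y).div_const 2).exp)
  have hden : HasDerivAt (fun y : ℝ => (1 + y ^ 2) ^ 2) (2 * (1 + y ^ 2) * (2 * y)) y :=
    (((hasDerivAt_pow 2 y).const_add 1).pow 2).congr_deriv (by ring)
  refine (((hasDerivAt_id' y).mul hexp).div hden (by positivity)).congr_deriv ?_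
  simp only [Pi.mul_apply]
  field_simp
  ring

lemma strictMonoOn_criticalRatio {D : Set ℝ} (hD : Convex ℝ D)
    (hD₁ : ∀ y ∈ interior D, y ^ 2 ≠ 1) : StrictMonoOn criticalRatio D := by
  refine strictMonoOn_of_deriv_pos hD
    (fun y _ => (hasDerivAt_criticalRatio y).continuousAt.continuousWithinAt) fun y hy => ?_
  have : (1 - y ^ 2) ^ 2 ≠ 0 := pow_ne_zero 2 (sub_ne_zero.2 (hD₁ y hy).symm)
  rw [(hasDerivAt_criticalRatio y).deriv]
  positivity

lemma strictMono_criticalRatio : StrictMono criticalRatio := by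
  refine strictMono_of_odd_strictMonoOn_nonneg criticalRatio_neg ?_
  rw [← Icc_union_Ici_eq_Ici zero_le_one]
  refine StrictMonoOn.union (c := 1) ?_ ?_ (isGreatest_Icc zero_le_one) isLeast_Ici
  · refine strictMonoOn_criticalRatio (convex_Icc 0 1) fun y hy => ?_
    rw [interior_Icc] at hy
    nlinarith [hy.1, hy.2]
  · refine strictMonoOn_criticalRatio (convex_Ici 1) fun y hy => ?_
    rw [interior_Ici] at hy
    nlinarith [mem_Ioi.1 hy]

def Psi (x : ℝ) : ℝ := 1 / (1 + x ^ 2) - stdNormalCDF (-x)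

lemma hasDerivAt_Psi (x : ℝ) :
    HasDerivAt Psi (2 * Real.exp (-x ^ 2 / 2) * (1 / √(8 * π) - criticalRatio x)) x := by
  have hrat : HasDerivAt (fun x : ℝ => 1 / (1 + x ^ 2)) (-(2 * x) / (1 + x ^ 2) ^ 2) x := by
    refine ((hasDerivAt_const x (1 : ℝ)).div ((hasDerivAt_pow 2 x).const_add 1)
      (by positivity)).congr_deriv ?_
    ring
  have hcdf : HasDerivAt (fun x : ℝ => stdNormalCDF (-x)) (-stdNormalPDF x) x :=
    ((hasDerivAt_stdNormalCDF (-x)).comp x (hasDerivAt_neg x)).congr_deriv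
      (by rw [stdNormalPDF_neg, mul_neg_one])
  refine (hrat.sub hcdf).congr_deriv ?_
  have h8 : √(8 * π) = 2 * √(2 * π) := by
    rw [show (8 : ℝ) * π = 2 ^ 2 * (2 * π) by ring, sqrt_mul (by norm_num), sqrt_sq (by norm_num)]
  unfold stdNormalPDF criticalRatio
  rw [neg_div 2 (x ^ 2), Real.exp_neg, h8]
  field_simp
  ring

lemma Psi_monotoneOn_Iic {c : ℝ} (hc : criticalRatio c = 1 / √(8 * π)) :
    MonotoneOn Psi (Iic c) := by
  refine monotoneOn_of_deriv_nonneg (convex_Iic c)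
    (fun y _ => (hasDerivAt_Psi y).continuousAt.continuousWithinAt)
    (fun y _ => (hasDerivAt_Psi y).differentiableAt.differentiableWithinAt) fun y hy => ?_
  rw [interior_Iic] at hy
  have : criticalRatio y ≤ 1 / √(8 * π) := hc ▸ strictMono_criticalRatio.monotone hy.le
  rw [(hasDerivAt_Psi y).deriv]
  exact mul_nonneg (by positivity) (sub_nonneg.2 this)

lemma Psi_strictAntiOn_Ici {c : ℝ} (hc : criticalRatio c = 1 / √(8 * π)) :
    StrictAntiOn Psi (Ici c) := by
  refine strictAntiOn_of_deriv_neg (convex_Ici c)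
    (fun y _ => (hasDerivAt_Psi y).continuousAt.continuousWithinAt) fun y hy => ?_
  rw [interior_Ici] at hy
  have : 1 / √(8 * π) < criticalRatio y := hc ▸ strictMono_criticalRatio hy
  rw [(hasDerivAt_Psi y).deriv]
  exact mul_neg_of_pos_of_neg (by positivity) (sub_neg.2 this)

end

theorem Psi_monotonicity_general (xΦ : ℝ)
    (hroot : xΦ * Real.exp (xΦ ^ 2 / 2) / (1 + xΦ ^ 2) ^ 2 = 1 / Real.sqrt (8 * Real.pi)) :
    MonotoneOn (fun x : ℝ => 1 / (1 + x ^ 2) - stdNormalCDF (-x)) (Set.Ioc 0 xΦ) ∧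
    StrictAntiOn (fun x : ℝ => 1 / (1 + x ^ 2) - stdNormalCDF (-x)) (Set.Ioi xΦ) :=
  ⟨(Psi_monotoneOn_Iic hroot).mono Ioc_subset_Iic_self,
    (Psi_strictAntiOn_Ici hroot).mono Ioi_subset_Ici_self⟩

theorem Psi_monotonicity (xΦ : ℝ) (hpos : 0 < xΦ)
    (hroot : xΦ * Real.exp (xΦ ^ 2 / 2) / (1 + xΦ ^ 2) ^ 2 = 1 / Real.sqrt (8 * Real.pi))
    (huniq : ∀ y : ℝ, 0 < y →
      y * Real.exp (y ^ 2 / 2) / (1 + y ^ 2) ^ 2 = 1 / Real.sqrt (8 * Real.pi) → y = xΦ) :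
    MonotoneOn (fun x : ℝ => 1 / (1 + x ^ 2) - stdNormalCDF (-x)) (Set.Ioc 0 xΦ) ∧
    StrictAntiOn (fun x : ℝ => 1 / (1 + x ^ 2) - stdNormalCDF (-x)) (Set.Ioi xΦ) :=
  Psi_monotonicity_general xΦ hroot
end
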